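/- arXiv:1506.07935 — 5 statements merged into one kernel-verified Lean document; each statement's English description precedes it below -/
import Mathlib

section
/- Let p be a prime, let 𝒪 be the ring of integers of a finite extension F of ℚ_p, let n be a non-negative integer, and let ζ ∈ 𝒪 be a root of unity satisfying ζ^{p^n} = 1. Then 𝔮 := (T − (ζ − 1)) is a prime ideal of the power series ring 𝒪[[T]], the localization 𝒪[[T]]_𝔮 is a discrete valuation ring, and its maximal ideal is generated by the image of the element (1 + T)^{p^n} − 1. -/
/-!
As `(ζ - 1) ^ p ^ n ∈ p𝒪` and `𝒪`, being finite over `ℤ_p`, is `p`-adically complete, evaluation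
at `ζ - 1` is a well-defined `𝒪`-algebra map `𝒪⟦T⟧ → 𝒪`. Its kernel is `(T - (ζ - 1))`, so `𝔮`
is prime. Since `𝒪⟦T⟧` is Noetherian, the localization at the principal prime `𝔮` is a Noetherian
local domain whose maximal ideal is principal and nonzero, hence a discrete valuation ring.
Finally `(1 + T) ^ p ^ n - 1 = (T - (ζ - 1)) g`, and differentiating shows that `g` takes the value
`p ^ n ζ ^ (p ^ n - 1) ≠ 0` at `ζ - 1`, so `g` is a unit of the localization.
-/

open PowerSeries

theorem WithIdeal.isTopologicallyNilpotent_of_pow_mem {R : Type*} [CommRing R] [WithIdeal R]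
    {a : R} {e : ℕ} (ha : a ^ e ∈ WithIdeal.i) : IsTopologicallyNilpotent a := by
  suffices ∀ m : ℕ, ∃ n₀, ∀ n, n₀ ≤ n → a ^ n ∈ WithIdeal.i ^ m by
    simpa [IsTopologicallyNilpotent, WithIdeal.i.hasBasis_nhds_zero_adic.tendsto_right_iff]
  refine fun m ↦ ⟨e * m, fun n hn ↦ ?_⟩
  rw [← Nat.add_sub_of_le hn, pow_add, pow_mul]
  exact Ideal.mul_mem_right _ _ (Ideal.pow_mem_pow ha m)

theorem IsPrecomplete.of_finite {R M : Type*} [CommRing R] (I : Ideal R) [IsPrecomplete I R]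
    [AddCommGroup M] [Module R M] [Module.Finite R M] : IsPrecomplete I M := by
  rw [← AdicCompletion.of_surjective_iff]
  intro y
  obtain ⟨t, rfl⟩ := AdicCompletion.ofTensorProduct_surjective_of_finite I M y
  induction t using TensorProduct.induction_on with
  | zero => exact ⟨0, by simp⟩
  | tmul r x =>
    obtain ⟨a, rfl⟩ := AdicCompletion.of_surjective I R r
    refine ⟨a • x, ?_⟩
    rw [AdicCompletion.ofTensorProduct_tmul, map_smul,
      show AdicCompletion.of I R a = algebraMap R _ a from rfl, algebraMap_smul]
  | add s t hs ht =>
    obtain ⟨x, hx⟩ := hs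
    obtain ⟨y, hy⟩ := ht
    exact ⟨x + y, by simp [hx, hy]⟩

theorem isAdicComplete_map_maximalIdeal (A S : Type*) [CommRing A] [IsNoetherianRing A]
    [IsLocalRing A] [IsAdicComplete (IsLocalRing.maximalIdeal A) A] [CommRing S] [Algebra A S]
    [Module.Finite A S] :
    IsAdicComplete ((IsLocalRing.maximalIdeal A).map (algebraMap A S)) S := by
  have := IsPrecomplete.of_finite (IsLocalRing.maximalIdeal A) (M := S)
  rw [IsAdicComplete.map_algebraMap_iff]
  -- Hausdorffness is Krull's intersection theorem, available as an instance.
  exact {}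

theorem sub_one_pow_prime_pow_mem_span {R : Type*} [CommRing R] {p : ℕ} (hp : p.Prime) {ζ : R}
    {n : ℕ} (hζ : ζ ^ p ^ n = 1) : (ζ - 1) ^ p ^ n ∈ Ideal.span {(p : R)} := by
  obtain ⟨r, hr⟩ := exists_add_pow_prime_pow_eq hp (ζ - 1) 1 n
  rw [sub_add_cancel, hζ, one_pow] at hr
  exact Ideal.mem_span_singleton'.2 ⟨-((ζ - 1) * r), by linear_combination hr⟩

namespace PowerSeries

section Evaluation

variable {R : Type*} [CommRing R] [UniformSpace R] [IsUniformAddGroup R] [IsTopologicalRing R]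
  [IsLinearTopology R R] [T2Space R] [CompleteSpace R] {c : R} (hc : HasEval c)

theorem aeval_C (a : R) : aeval hc (C a) = a := by
  simpa using aeval_coe hc (Polynomial.C a)

theorem aeval_X : aeval hc (X : R⟦X⟧) = c := by
  simpa using aeval_coe hc Polynomial.X

theorem aeval_mk_coeff_add (f : R⟦X⟧) (j : ℕ) :
    aeval hc (mk fun k ↦ coeff (k + j) f) =
      coeff j f + c * aeval hc (mk fun k ↦ coeff (k + (j + 1)) f) := by
  conv_lhs => rw [eq_X_mul_shift_add_const (mk fun k ↦ coeff (k + j) f)]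
  simp [aeval_X, aeval_C, add_comm, add_left_comm]

/-- The quotient is `∑ⱼ (∑_{k > j} aₖ c ^ (k - 1 - j)) Xʲ`: its coefficients are the values at `c`
of the tails of `f`. -/
theorem X_sub_C_dvd_sub_C_aeval (f : R⟦X⟧) : X - C c ∣ f - C (aeval hc f) := by
  refine ⟨mk fun j ↦ aeval hc (mk fun k ↦ coeff (k + (j + 1)) f), ?_⟩
  ext (_ | n)
  · have := aeval_mk_coeff_add hc f 0
    simp only [add_zero, zero_add, show (mk fun k ↦ coeff k f) = f from ext fun _ ↦ coeff_mk _ _]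
      at this
    simp [this, sub_mul]
  · simp [sub_mul, coeff_succ_X_mul, aeval_mk_coeff_add hc f (n + 1)]

theorem ker_aeval : RingHom.ker (aeval hc) = Ideal.span {X - C c} := by
  ext f
  rw [RingHom.mem_ker, Ideal.mem_span_singleton]
  constructor
  · intro hf
    simpa [hf] using X_sub_C_dvd_sub_C_aeval hc f
  · rintro ⟨g, rfl⟩
    simp [aeval_X, aeval_C]

end Evaluation

theorem exists_algHom_ker_eq_span_X_sub_C {R : Type*} [CommRing R] (I : Ideal R)
    [IsAdicComplete I R] {c : R} {e : ℕ} (hc : c ^ e ∈ I) :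
    ∃ φ : R⟦X⟧ →ₐ[R] R, φ X = c ∧ RingHom.ker φ = Ideal.span {X - C c} := by
  let : WithIdeal R := ⟨I⟩
  obtain ⟨_, _⟩ := (IsAdic.isAdicComplete_iff (I := I) rfl).1 ‹_›
  have hc : HasEval c := WithIdeal.isTopologicallyNilpotent_of_pow_mem hc
  exact ⟨aeval hc, aeval_X hc, ker_aeval hc⟩

theorem map_derivative_X_sub_C_mul {R S F : Type*} [CommRing R] [CommRing S] [FunLike F R⟦X⟧ S]
    [RingHomClass F R⟦X⟧ S] (φ : F) {c : R} (hφ : φ (X - C c) = 0) (g : R⟦X⟧) :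
    φ (d⁄dX R ((X - C c) * g)) = φ g := by
  simp [Derivation.leibniz, map_sub, derivative_X, derivative_C, hφ]

end PowerSeries

namespace Localization.AtPrime

variable {R : Type*} [CommRing R] {t : R} [(Ideal.span {t}).IsPrime]

theorem maximalIdeal_eq_span_singleton :
    IsLocalRing.maximalIdeal (Localization.AtPrime (Ideal.span {t})) =
      Ideal.span {algebraMap R (Localization.AtPrime (Ideal.span {t})) t} := by
  rw [← map_eq_maximalIdeal, Ideal.map_span, Set.image_singleton]

theorem maximalIdeal_eq_span_singleton_mul {g : R} (hg : g ∉ Ideal.span {t}) :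
    IsLocalRing.maximalIdeal (Localization.AtPrime (Ideal.span {t})) =
      Ideal.span {algebraMap R (Localization.AtPrime (Ideal.span {t})) (t * g)} := by
  have hg : IsUnit (algebraMap R (Localization.AtPrime (Ideal.span {t})) g) :=
    (IsLocalization.AtPrime.isUnit_to_map_iff _ (Ideal.span {t}) g).2 hg
  rw [map_mul, Ideal.span_singleton_mul_right_unit hg, maximalIdeal_eq_span_singleton]

theorem isDiscreteValuationRing_of_span_singleton [IsDomain R] [IsNoetherianRing R]
    (ht : t ≠ 0) : IsDiscreteValuationRing (Localization.AtPrime (Ideal.span {t})) := by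
  have hne : IsLocalRing.maximalIdeal (Localization.AtPrime (Ideal.span {t})) ≠ ⊥ := by
    rw [maximalIdeal_eq_span_singleton (t := t), Ne, Ideal.span_singleton_eq_bot]
    exact (map_ne_zero_iff _ (IsLocalization.injective _
      (Ideal.span {t}).primeCompl_le_nonZeroDivisors)).2 ht
  have hprincipal :
      (IsLocalRing.maximalIdeal (Localization.AtPrime (Ideal.span {t}))).IsPrincipal :=
    ⟨_, maximalIdeal_eq_span_singleton⟩
  exact ((IsDiscreteValuationRing.TFAE _
    (IsLocalRing.isField_iff_maximalIdeal_eq.not.2 hne)).out 0 4).2 hprincipal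

end Localization.AtPrime

theorem stmt_3_general (p : ℕ) [Fact p.Prime] (n : ℕ)
    (𝒪 : Type*) [CommRing 𝒪] [IsDomain 𝒪] [CharZero 𝒪]
    [Algebra ℤ_[p] 𝒪] [Module.Finite ℤ_[p] 𝒪]
    (ζ : 𝒪) (hζ : ζ ^ p ^ n = 1)
    (𝔮 : Ideal (PowerSeries 𝒪))
    (h𝔮 : 𝔮 = Ideal.span {PowerSeries.X - PowerSeries.C (ζ - 1)}) :
    ∃ _ : 𝔮.IsPrime, ∃ _ : IsDomain (Localization.AtPrime 𝔮),
      IsDiscreteValuationRing (Localization.AtPrime 𝔮) ∧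
      IsLocalRing.maximalIdeal (Localization.AtPrime 𝔮) =
        Ideal.span {algebraMap (PowerSeries 𝒪) (Localization.AtPrime 𝔮)
          ((1 + PowerSeries.X) ^ p ^ n - 1)} := by
  subst h𝔮
  have hp : p.Prime := Fact.out
  have : IsNoetherianRing 𝒪 := .of_finite ℤ_[p] 𝒪
  have := isAdicComplete_map_maximalIdeal ℤ_[p] 𝒪
  have hζp : (ζ - 1) ^ p ^ n ∈ (IsLocalRing.maximalIdeal ℤ_[p]).map (algebraMap ℤ_[p] 𝒪) := by
    rw [PadicInt.maximalIdeal_eq_span_p, Ideal.map_span, Set.image_singleton, map_natCast]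
    exact sub_one_pow_prime_pow_mem_span hp hζ
  obtain ⟨φ, hφX, hφ⟩ := exists_algHom_ker_eq_span_X_sub_C _ hζp
  have hmem (f : 𝒪⟦X⟧) : f ∈ Ideal.span {X - C (ζ - 1)} ↔ φ f = 0 := by
    rw [← hφ, RingHom.mem_ker]
  have hprime : (Ideal.span {X - C (ζ - 1)}).IsPrime := hφ ▸ RingHom.ker_isPrime φ
  obtain ⟨g, hg⟩ : X - C (ζ - 1) ∣ (1 + X) ^ p ^ n - 1 := by
    rw [← Ideal.mem_span_singleton, hmem]
    simp [hφX, hζ]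
  have hg_notMem : g ∉ Ideal.span {X - C (ζ - 1)} := by
    have hζ0 : ζ ≠ 0 := by
      rintro rfl
      simp [hp.ne_zero] at hζ
    rw [hmem, ← map_derivative_X_sub_C_mul φ ((hmem _).1 (Ideal.mem_span_singleton_self _)),
      ← hg]
    simp [Derivation.leibniz_pow, derivative_X, hφX, hp.ne_zero, hζ0]
  refine ⟨hprime, inferInstance,
    Localization.AtPrime.isDiscreteValuationRing_of_span_singleton ?_, ?_⟩
  · exact fun h ↦ by simpa using congrArg (coeff 1) h
  · rw [hg, Localization.AtPrime.maximalIdeal_eq_span_singleton_mul hg_notMem]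

/-- Let `p` be a prime, `𝒪` the ring of integers of a finite extension `F` of `ℚ_p`
(encoded abstractly: an integrally closed domain of characteristic zero that is finite as an
`ℤ_p`-module), `n ≥ 0`, and `ζ ∈ 𝒪` a root of unity with `ζ^(p^n) = 1`.  Then
`𝔮 := (T − (ζ − 1))` is a prime ideal of `𝒪[[T]]`, the localization `𝒪[[T]]_𝔮` is a
discrete valuation ring, and its maximal ideal is generated by the image of
`(1 + T)^(p^n) − 1`. -/
theorem stmt_3 (p : ℕ) [Fact p.Prime] (n : ℕ)
    (𝒪 : Type*) [CommRing 𝒪] [IsDomain 𝒪] [CharZero 𝒪] [IsIntegrallyClosed 𝒪]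
    [Algebra ℤ_[p] 𝒪] [Module.Finite ℤ_[p] 𝒪]
    (ζ : 𝒪) (hζ : ζ ^ p ^ n = 1)
    (𝔮 : Ideal (PowerSeries 𝒪))
    (h𝔮 : 𝔮 = Ideal.span {PowerSeries.X - PowerSeries.C (ζ - 1)}) :
    ∃ _ : 𝔮.IsPrime, ∃ _ : IsDomain (Localization.AtPrime 𝔮),
      IsDiscreteValuationRing (Localization.AtPrime 𝔮) ∧
      IsLocalRing.maximalIdeal (Localization.AtPrime 𝔮) =
        Ideal.span {algebraMap (PowerSeries 𝒪) (Localization.AtPrime 𝔮)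
          ((1 + PowerSeries.X) ^ p ^ n - 1)} :=
  stmt_3_general p n 𝒪 ζ hζ 𝔮 h𝔮
end

section
/- Let R be a discrete valuation ring with uniformizer ϖ and residue field E = R/(ϖ). Let Π be a finite free R-module, ψ: Π → Π an R-linear map, and ψ̄: Π/ϖΠ → Π/ϖΠ its reduction modulo ϖ. Then the Bockstein map β: ker ψ̄ → coker ψ̄, defined by β(x mod ϖΠ) := y mod (ψ(Π) + ϖΠ) where x ∈ Π is any lift with ψ(x) = ϖy, is well-defined (independent of the choice of lift), and if moreover the R-torsion submodule of coker ψ is annihilated by ϖ, then the natural E-linear map (ker ψ) ⊗_R E → ker ψ̄ induced by the inclusion ker ψ ⊆ Π is injective and its image is exactly ker β. -/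
open Pointwise

/-!
Write `x ↦ y` when `ψ x = ϖ • y`; since `M` is `ϖ`-torsion-free, `y` is determined by `x`.
If `x - x' = ϖ • m` then `ϖ • (y - y') = ϖ • ψ m`, so `y - y' = ψ m`: the Bockstein map is
well defined. Conversely, if `ψ w - y = ϖ • m`, then `ψ (x - ϖ • w) = -(ϖ * ϖ) • m`, so the
class of `m` in `coker ψ` is killed by `ϖ²`, hence by `ϖ`: `ϖ • m = ψ t`, and
`x - ϖ • (w - t)` is a lift of `x mod ϖ` lying in `ker ψ`.
-/

section Bockstein

variable {R M : Type*} [CommRing R] [AddCommGroup M] [Module R M] {ϖ : R} {ψ : M →ₗ[R] M}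

theorem mem_smul_top_iff {z : M} : z ∈ ϖ • (⊤ : Submodule R M) ↔ ∃ m, ϖ • m = z := by
  simp [Submodule.mem_smul_pointwise_iff_exists]

theorem sub_eq_map_of_map_eq_smul (hϖ : IsSMulRegular M ϖ) {x x' y y' m : M}
    (hy : ψ x = ϖ • y) (hy' : ψ x' = ϖ • y') (hm : ϖ • m = x - x') : y - y' = ψ m :=
  hϖ <| show ϖ • _ = ϖ • _ by rw [smul_sub, ← hy, ← hy', ← map_sub, ← hm, map_smul]

theorem map_eq_zero_of_map_smul_eq_zero (hϖ : IsSMulRegular M ϖ) {z : M}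
    (hz : ψ (ϖ • z) = 0) : ψ z = 0 :=
  hϖ <| show ϖ • _ = ϖ • _ by rw [← map_smul, hz, smul_zero]

theorem eq_zero_of_map_eq_zero_of_map_eq_smul (hϖ : IsSMulRegular M ϖ) {x y : M}
    (hx : ψ x = 0) (hy : ψ x = ϖ • y) : y = 0 :=
  hϖ <| show ϖ • _ = ϖ • _ by rw [smul_zero, ← hy, hx]

theorem exists_map_sub_smul_eq_zero
    (htor : ∀ c : M ⧸ LinearMap.range ψ, (ϖ * ϖ) • c = 0 → ϖ • c = 0)
    {x y w m : M} (hy : ψ x = ϖ • y) (hm : ϖ • m = ψ w - y) :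
    ∃ v, ψ (x - ϖ • v) = 0 := by
  have hx : ψ (x - ϖ • w) = -((ϖ * ϖ) • m) := by
    rw [map_sub, map_smul, hy, mul_smul, hm, smul_sub, neg_sub]
  have hm_tor : (ϖ * ϖ) • (Submodule.Quotient.mk m : M ⧸ LinearMap.range ψ) = 0 := by
    rw [← Submodule.Quotient.mk_smul, Submodule.Quotient.mk_eq_zero]
    exact ⟨ϖ • w - x, by rw [← neg_sub, map_neg, hx, neg_neg]⟩
  obtain ⟨t, ht⟩ := (Submodule.Quotient.mk_eq_zero _).1 (htor _ hm_tor)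
  refine ⟨w - t, ?_⟩
  rw [smul_sub, ← sub_add, map_add, hx, map_smul, ht, mul_smul, neg_add_cancel]

end Bockstein

theorem stmt_5_general (R : Type*) [CommRing R] [IsDomain R]
    (ϖ : R) (hϖ : Irreducible ϖ)
    (M : Type*) [AddCommGroup M] [Module R M] [Module.Free R M]
    (ψ : M →ₗ[R] M)
    (ϖM : Submodule R M) (hϖM : ϖM = ϖ • (⊤ : Submodule R M))
    (ψbar : (M ⧸ ϖM) →ₗ[R] (M ⧸ ϖM))
    (hψbar : ∀ x : M, ψbar (Submodule.Quotient.mk x) = Submodule.Quotient.mk (ψ x)) :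
    (∀ x x' y y' : M,
        (Submodule.Quotient.mk x : M ⧸ ϖM) = Submodule.Quotient.mk x' →
        ψ x = ϖ • y → ψ x' = ϖ • y' →
        (Submodule.Quotient.mk (Submodule.Quotient.mk y : M ⧸ ϖM) :
            (M ⧸ ϖM) ⧸ LinearMap.range ψbar) =
          Submodule.Quotient.mk (Submodule.Quotient.mk y' : M ⧸ ϖM)) ∧
    ((∀ c : M ⧸ LinearMap.range ψ, (∃ r : R, r ≠ 0 ∧ r • c = 0) → ϖ • c = 0) →
      (∀ x : M, ψ x = 0 → (Submodule.Quotient.mk x : M ⧸ ϖM) = 0 →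
          ∃ z : M, ψ z = 0 ∧ x = ϖ • z) ∧
      (∀ x y : M, ψ x = 0 → ψ x = ϖ • y →
          (Submodule.Quotient.mk y : M ⧸ ϖM) ∈ LinearMap.range ψbar) ∧
      (∀ x y : M, ψ x = ϖ • y →
          (Submodule.Quotient.mk y : M ⧸ ϖM) ∈ LinearMap.range ψbar →
          ∃ u : M, ψ u = 0 ∧
            (Submodule.Quotient.mk u : M ⧸ ϖM) = Submodule.Quotient.mk x)) := by
  subst hϖM
  have hϖ0 : ϖ ≠ 0 := hϖ.ne_zero
  have hreg : IsSMulRegular M ϖ := .of_ne_zero hϖ0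
  refine ⟨fun x x' y y' hxx' hy hy' => ?_, fun htor => ⟨?_, ?_, ?_⟩⟩
  · obtain ⟨m, hm⟩ := mem_smul_top_iff.1 ((Submodule.Quotient.eq _).1 hxx')
    rw [Submodule.Quotient.eq, ← Submodule.Quotient.mk_sub,
      sub_eq_map_of_map_eq_smul hreg hy hy' hm]
    exact ⟨_, hψbar m⟩
  · intro x hx hx0
    obtain ⟨z, rfl⟩ := mem_smul_top_iff.1 ((Submodule.Quotient.mk_eq_zero _).1 hx0)
    exact ⟨z, map_eq_zero_of_map_smul_eq_zero hreg hx, rfl⟩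
  · intro x y hx hy
    rw [eq_zero_of_map_eq_zero_of_map_eq_smul hreg hx hy]
    exact zero_mem _
  · rintro x y hy ⟨q, hq⟩
    obtain ⟨w, rfl⟩ := Submodule.Quotient.mk_surjective _ q
    rw [hψbar, Submodule.Quotient.eq] at hq
    obtain ⟨m, hm⟩ := mem_smul_top_iff.1 hq
    obtain ⟨v, hv⟩ := exists_map_sub_smul_eq_zero
      (fun c hc => htor c ⟨_, mul_ne_zero hϖ0 hϖ0, hc⟩) hy hm
    refine ⟨x - ϖ • v, hv, (Submodule.Quotient.eq _).2 (mem_smul_top_iff.2 ⟨-v, ?_⟩)⟩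
    rw [smul_neg, sub_sub_cancel_left]

/-- Let `R` be a discrete valuation ring with uniformizer `ϖ` and residue field `E = R/(ϖ)`.
Let `Π` (here `M`) be a finite free `R`-module, `ψ : M → M` an `R`-linear map and
`ψbar : M/ϖM → M/ϖM` its reduction mod `ϖ`.  Then the Bockstein map
`β : ker ψbar → coker ψbar`, `β(x mod ϖM) := y mod (ψ(M) + ϖM)` where `ψ(x) = ϖ·y`,
is well-defined (first conjunct: independence of the chosen lift), and if the `R`-torsion
submodule of `coker ψ` is annihilated by `ϖ`, then the natural `E`-linear map
`(ker ψ) ⊗_R E → ker ψbar` is injective (stated elementarily: if `x ∈ ker ψ` maps to `0` in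
`M/ϖM` then `x ∈ ϖ·(ker ψ)`) and its image is exactly `ker β` (the last two conjuncts). -/
theorem stmt_5 (R : Type*) [CommRing R] [IsDomain R] [IsDiscreteValuationRing R]
    (ϖ : R) (hϖ : Irreducible ϖ)
    (M : Type*) [AddCommGroup M] [Module R M] [Module.Free R M] [Module.Finite R M]
    (ψ : M →ₗ[R] M)
    (ϖM : Submodule R M) (hϖM : ϖM = ϖ • (⊤ : Submodule R M))
    (ψbar : (M ⧸ ϖM) →ₗ[R] (M ⧸ ϖM))
    (hψbar : ∀ x : M, ψbar (Submodule.Quotient.mk x) = Submodule.Quotient.mk (ψ x)) :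
    (∀ x x' y y' : M,
        (Submodule.Quotient.mk x : M ⧸ ϖM) = Submodule.Quotient.mk x' →
        ψ x = ϖ • y → ψ x' = ϖ • y' →
        (Submodule.Quotient.mk (Submodule.Quotient.mk y : M ⧸ ϖM) :
            (M ⧸ ϖM) ⧸ LinearMap.range ψbar) =
          Submodule.Quotient.mk (Submodule.Quotient.mk y' : M ⧸ ϖM)) ∧
    ((∀ c : M ⧸ LinearMap.range ψ, (∃ r : R, r ≠ 0 ∧ r • c = 0) → ϖ • c = 0) →
      (∀ x : M, ψ x = 0 → (Submodule.Quotient.mk x : M ⧸ ϖM) = 0 →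
          ∃ z : M, ψ z = 0 ∧ x = ϖ • z) ∧
      (∀ x y : M, ψ x = 0 → ψ x = ϖ • y →
          (Submodule.Quotient.mk y : M ⧸ ϖM) ∈ LinearMap.range ψbar) ∧
      (∀ x y : M, ψ x = ϖ • y →
          (Submodule.Quotient.mk y : M ⧸ ϖM) ∈ LinearMap.range ψbar →
          ∃ u : M, ψ u = 0 ∧
            (Submodule.Quotient.mk u : M ⧸ ϖM) = Submodule.Quotient.mk x)) :=
  stmt_5_general R ϖ hϖ M ψ ϖM hϖM ψbar hψbar
end

section
/- Let R be a discrete valuation ring with uniformizer ϖ and residue field E = R/(ϖ). Let Π be a finite free R-module, ψ: Π → Π an R-linear map, and ψ̄: Π/ϖΠ → Π/ϖΠ its reduction modulo ϖ; write H¹ = coker ψ, let H¹_tors be its R-torsion submodule and H¹_tf = H¹/H¹_tors. Assume H¹_tors is annihilated by ϖ. Then the image of the Bockstein map β: ker ψ̄ → coker ψ̄ = H¹/ϖH¹ equals the image of H¹_tors under the projection H¹ → H¹/ϖH¹; consequently β induces an E-linear isomorphism coker β ≅ H¹_tf ⊗_R E. -/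
open Pointwise

open scoped TensorProduct

/-! Let `K ⊆ M` be the preimage of the torsion of `H¹ = M ⧸ ψ(M)`. As the torsion is killed
by `ϖ`, `t ∈ K` exactly when `ϖ • t = ψ x` for some `x`, so the image of the Bockstein map is
the image of `K`. Hence `coker β` and `H¹_tf ⊗ E ≅ H¹_tf ⧸ ϖ H¹_tf` are both the quotient of `M`
by `K ⊔ ϖM`. -/

open Submodule LinearMap

theorem LinearMap.exists_linearEquiv_apply_eq_of_ker_eq {R M A B : Type*} [Ring R]
    [AddCommGroup M] [AddCommGroup A] [AddCommGroup B] [Module R M] [Module R A] [Module R B]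
    (f : M →ₗ[R] A) (g : M →ₗ[R] B) (hf : Function.Surjective f)
    (hg : Function.Surjective g) (h : ker f = ker g) :
    ∃ e : A ≃ₗ[R] B, ∀ m, e (f m) = g m :=
  ⟨(f.quotKerEquivOfSurjective hf).symm ≪≫ₗ quotEquivOfEq _ _ h ≪≫ₗ
      g.quotKerEquivOfSurjective hg, fun m => by
    simp [quotKerEquivOfSurjective_apply_mk]⟩

section

variable {R M : Type*} [CommRing R] [AddCommGroup M] [Module R M]

theorem Submodule.mk_mem_torsion_quotient_range_iff {N : Type*} [AddCommGroup N] [Module R N]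
    {ψ : N →ₗ[R] M} {ϖ : R} (hϖ : ϖ ∈ nonZeroDivisors R)
    (hkill : ∀ c ∈ torsion R (M ⧸ range ψ), ϖ • c = 0) (t : M) :
    (Submodule.Quotient.mk t : M ⧸ range ψ) ∈ torsion R (M ⧸ range ψ) ↔ ∃ x, ψ x = ϖ • t := by
  rw [← mem_range, ← Submodule.Quotient.mk_eq_zero (range ψ), Submodule.Quotient.mk_smul]
  exact ⟨hkill _, fun h => ⟨⟨ϖ, hϖ⟩, h⟩⟩

theorem Submodule.comap_ideal_smul_top_of_surjective {Q : Type*} [AddCommGroup Q] [Module R Q]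
    {p : M →ₗ[R] Q} (hp : Function.Surjective p) (I : Ideal R) :
    comap p (I • ⊤) = I • ⊤ ⊔ ker p := by
  rw [← comap_map_eq, map_smul'', map_top, range_eq_top.mpr hp]

theorem LinearMap.ker_mkQ_comp_mkQ_of_comp_mkQ_eq {N : Submodule R M} {ψ : M →ₗ[R] M}
    {ψbar : M ⧸ N →ₗ[R] M ⧸ N} (hψbar : ψbar ∘ₗ N.mkQ = N.mkQ ∘ₗ ψ) :
    ker ((range ψbar).mkQ ∘ₗ N.mkQ) = N ⊔ range ψ := by
  have hrange : range ψbar = map N.mkQ (range ψ) := by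
    rw [← range_comp_of_range_eq_top ψbar (range_mkQ N), hψbar, range_comp]
  rw [ker_comp, ker_mkQ, hrange, comap_map_mkQ]

end

theorem stmt_6_general (R : Type*) [CommRing R] [IsDomain R]
    (ϖ : R) (hϖ : Irreducible ϖ)
    (M : Type*) [AddCommGroup M] [Module R M]
    (ψ : M →ₗ[R] M)
    (ϖM : Submodule R M) (hϖM : ϖM = ϖ • (⊤ : Submodule R M))
    (ψbar : (M ⧸ ϖM) →ₗ[R] (M ⧸ ϖM))
    (hψbar : ∀ x : M, ψbar (Submodule.Quotient.mk x) = Submodule.Quotient.mk (ψ x))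
    (htors : ∀ c : M ⧸ LinearMap.range ψ, (∃ r : R, r ≠ 0 ∧ r • c = 0) → ϖ • c = 0)
    (imβ : Submodule R ((M ⧸ ϖM) ⧸ LinearMap.range ψbar))
    (himβ : imβ = Submodule.span R {c | ∃ x y : M, ψ x = ϖ • y ∧
        c = Submodule.Quotient.mk (Submodule.Quotient.mk y : M ⧸ ϖM)}) :
    (∀ c : (M ⧸ ϖM) ⧸ LinearMap.range ψbar,
        (∃ x y : M, ψ x = ϖ • y ∧
            c = Submodule.Quotient.mk (Submodule.Quotient.mk y : M ⧸ ϖM)) ↔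
          (∃ t : M, (Submodule.Quotient.mk t : M ⧸ LinearMap.range ψ) ∈
              Submodule.torsion R (M ⧸ LinearMap.range ψ) ∧
            c = Submodule.Quotient.mk (Submodule.Quotient.mk t : M ⧸ ϖM))) ∧
    ∃ e : (((M ⧸ ϖM) ⧸ LinearMap.range ψbar) ⧸ imβ) ≃ₗ[R]
        ((M ⧸ LinearMap.range ψ) ⧸ Submodule.torsion R (M ⧸ LinearMap.range ψ)) ⊗[R]
          (R ⧸ Ideal.span {ϖ}),
      ∀ t : M,
        e (Submodule.Quotient.mk (Submodule.Quotient.mk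
            (Submodule.Quotient.mk t : M ⧸ ϖM))) =
          (Submodule.Quotient.mk (Submodule.Quotient.mk t :
              M ⧸ LinearMap.range ψ)) ⊗ₜ[R] (1 : R ⧸ Ideal.span {ϖ}) := by
  have htors_iff := mk_mem_torsion_quotient_range_iff (ψ := ψ)
    (mem_nonZeroDivisors_of_ne_zero hϖ.ne_zero)
    fun c ⟨⟨r, hr⟩, hrc⟩ => htors c ⟨r, nonZeroDivisors.ne_zero hr, hrc⟩
  refine ⟨fun c => by rw [exists_comm]; simp only [htors_iff, exists_and_right], ?_⟩
  set K := comap (range ψ).mkQ (torsion R (M ⧸ range ψ))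
  set π := (range ψbar).mkQ ∘ₗ ϖM.mkQ
  set p := (torsion R (M ⧸ range ψ)).mkQ ∘ₗ (range ψ).mkQ
  have hψK : range ψ ≤ K := by simpa using ker_le_comap (range ψ).mkQ (p := torsion R _)
  have himβK : imβ = map π K := by
    rw [himβ, ← span_eq K, ← span_image]
    congr 1
    ext c
    simp only [Set.mem_ofPred_eq, Set.mem_image, SetLike.mem_coe, K, mem_comap, mkQ_apply,
      htors_iff]
    rw [exists_comm]
    simp only [exists_and_right, eq_comm]
    rfl
  have hkerπ : ker π = ϖM ⊔ range ψ :=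
    ker_mkQ_comp_mkQ_of_comp_mkQ_eq (LinearMap.ext fun x => hψbar x)
  have hker_cokerβ : ker (imβ.mkQ ∘ₗ π) = K ⊔ ϖM := by
    rw [ker_comp, ker_mkQ, himβK, comap_map_eq, hkerπ, ← sup_assoc, sup_right_comm,
      sup_eq_left.mpr hψK]
  have hp : Function.Surjective p := (mkQ_surjective _).comp (mkQ_surjective _)
  have hker_tf : ker ((Ideal.span {ϖ} • ⊤ : Submodule R _).mkQ ∘ₗ p) = K ⊔ ϖM := by
    rw [ker_comp, ker_mkQ, comap_ideal_smul_top_of_surjective hp, ideal_span_singleton_smul, hϖM,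
      ker_comp, ker_mkQ, sup_comm]
  obtain ⟨e, he⟩ := exists_linearEquiv_apply_eq_of_ker_eq (imβ.mkQ ∘ₗ π)
    ((Ideal.span {ϖ} • ⊤ : Submodule R _).mkQ ∘ₗ p)
    ((mkQ_surjective _).comp ((mkQ_surjective _).comp (mkQ_surjective _)))
    ((mkQ_surjective _).comp hp) (hker_cokerβ.trans hker_tf.symm)
  refine ⟨e ≪≫ₗ (TensorProduct.tensorQuotEquivQuotSMul _ _).symm, fun t => ?_⟩
  rw [LinearEquiv.trans_apply]
  exact (congrArg _ (he t)).trans (TensorProduct.tensorQuotEquivQuotSMul_symm_mk _ _)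

/-- Let `R` be a discrete valuation ring with uniformizer `ϖ` and residue field
`E = R/(ϖ)`.  Let `Π` (here `M`) be a finite free `R`-module, `ψ : M → M` an `R`-linear map
with reduction `ψbar : M/ϖM → M/ϖM`; write `H¹ = coker ψ`, `H¹_tors` its torsion submodule
and `H¹_tf = H¹/H¹_tors`.  Assume `H¹_tors` is annihilated by `ϖ`.  Then the image of the
Bockstein map `β : ker ψbar → coker ψbar = H¹/ϖH¹` (whose values are the classes of the `y`
with `ψ x = ϖ·y`) equals the image of `H¹_tors` under `H¹ → H¹/ϖH¹` (first conjunct), and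
consequently `β` induces an `E`-linear isomorphism `coker β ≅ H¹_tf ⊗_R E` (second
conjunct, stated as an `R`-linear isomorphism sending the class of `t` to
`(t mod torsion) ⊗ 1`; both sides are killed by `ϖ`, so `R`-linearity is equivalent to
`E`-linearity). -/
theorem stmt_6 (R : Type*) [CommRing R] [IsDomain R] [IsDiscreteValuationRing R]
    (ϖ : R) (hϖ : Irreducible ϖ)
    (M : Type*) [AddCommGroup M] [Module R M] [Module.Free R M] [Module.Finite R M]
    (ψ : M →ₗ[R] M)
    (ϖM : Submodule R M) (hϖM : ϖM = ϖ • (⊤ : Submodule R M))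
    (ψbar : (M ⧸ ϖM) →ₗ[R] (M ⧸ ϖM))
    (hψbar : ∀ x : M, ψbar (Submodule.Quotient.mk x) = Submodule.Quotient.mk (ψ x))
    (htors : ∀ c : M ⧸ LinearMap.range ψ, (∃ r : R, r ≠ 0 ∧ r • c = 0) → ϖ • c = 0)
    (imβ : Submodule R ((M ⧸ ϖM) ⧸ LinearMap.range ψbar))
    (himβ : imβ = Submodule.span R {c | ∃ x y : M, ψ x = ϖ • y ∧
        c = Submodule.Quotient.mk (Submodule.Quotient.mk y : M ⧸ ϖM)}) :
    (∀ c : (M ⧸ ϖM) ⧸ LinearMap.range ψbar,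
        (∃ x y : M, ψ x = ϖ • y ∧
            c = Submodule.Quotient.mk (Submodule.Quotient.mk y : M ⧸ ϖM)) ↔
          (∃ t : M, (Submodule.Quotient.mk t : M ⧸ LinearMap.range ψ) ∈
              Submodule.torsion R (M ⧸ LinearMap.range ψ) ∧
            c = Submodule.Quotient.mk (Submodule.Quotient.mk t : M ⧸ ϖM))) ∧
    ∃ e : (((M ⧸ ϖM) ⧸ LinearMap.range ψbar) ⧸ imβ) ≃ₗ[R]
        ((M ⧸ LinearMap.range ψ) ⧸ Submodule.torsion R (M ⧸ LinearMap.range ψ)) ⊗[R]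
          (R ⧸ Ideal.span {ϖ}),
      ∀ t : M,
        e (Submodule.Quotient.mk (Submodule.Quotient.mk
            (Submodule.Quotient.mk t : M ⧸ ϖM))) =
          (Submodule.Quotient.mk (Submodule.Quotient.mk t :
              M ⧸ LinearMap.range ψ)) ⊗ₜ[R] (1 : R ⧸ Ideal.span {ϖ}) :=
  stmt_6_general R ϖ hϖ M ψ ϖM hϖM ψbar hψbar htors imβ himβ
end

section
/- Let R be a discrete valuation ring with fraction field Q, let Π be a finite free R-module, and let U ⊆ Π be an R-submodule which is a direct summand of Π. Then for every non-negative integer r the natural maps ⋀^r_R U → ⋀^r_R Π → Q ⊗_R ⋀^r_R Π are injective, and inside Q ⊗_R ⋀^r_R Π the image of ⋀^r_R U is equal to the intersection of the Q-subspace Q ⊗_R ⋀^r_R U with the image of ⋀^r_R Π. -/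
/-!
An `R`-linear map `F : A → B` with a retraction `G` cuts out `A` from `B` after any base change:
if `z = F_Q q` also equals `1 ⊗ m` with `m ∈ B`, then applying `G_Q` gives `q = 1 ⊗ G m`, so
`z = 1 ⊗ F (G m)`. A projection of `M` onto the direct summand `U` gives such a retraction of
`⋀^r U → ⋀^r M`. Finally `⋀^r M` is free, hence flat, hence torsion free, so it embeds in its
localization `Q ⊗_R ⋀^r M`.
-/

open TensorProduct

theorem LinearMap.range_mk_comp_eq_range_baseChange_inf_range_mk {R S A B : Type*} [CommRing R]
    [CommRing S] [Algebra R S] [AddCommGroup A] [Module R A] [AddCommGroup B] [Module R B]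
    (F : A →ₗ[R] B) (G : B →ₗ[R] A) (hGF : G ∘ₗ F = LinearMap.id) :
    range (TensorProduct.mk R S B 1 ∘ₗ F) =
      (range (F.baseChange S)).restrictScalars R ⊓ range (TensorProduct.mk R S B 1) := by
  refine le_antisymm (fun z ⟨a, ha⟩ ↦ ⟨⟨1 ⊗ₜ a, by simpa using ha⟩, ⟨F a, ha⟩⟩) ?_
  rintro z ⟨⟨q, rfl⟩, ⟨m, hm⟩⟩
  have hq : q = 1 ⊗ₜ G m := by
    calc q = (G.baseChange S ∘ₗ F.baseChange S) q := by
          rw [← baseChange_comp, hGF, baseChange_id, id_apply]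
      _ = 1 ⊗ₜ G m := by rw [comp_apply, ← hm, mk_apply, baseChange_tmul]
  exact ⟨G m, by rw [hq, baseChange_tmul]; rfl⟩

theorem exteriorPower.coe_map_apply {R M N : Type*} [CommRing R] [AddCommGroup M] [Module R M]
    [AddCommGroup N] [Module R N] {n : ℕ} (f : M →ₗ[R] N) (x : ⋀[R]^n M) :
    (map n f x : ExteriorAlgebra R N) = ExteriorAlgebra.map f x := by
  have : (⋀[R]^n N).subtype ∘ₗ map n f =
      (ExteriorAlgebra.map f).toLinearMap ∘ₗ (⋀[R]^n M).subtype := by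
    ext m
    simp [ExteriorAlgebra.map_apply_ιMulti]
  exact LinearMap.congr_fun this x

theorem TensorProduct.mk_one_injective_of_isFractionRing {R : Type*} (Q : Type*) [CommRing R]
    [CommRing Q] [Algebra R Q] [IsFractionRing R Q] (M : Type*) [AddCommGroup M] [Module R M]
    [Module.Flat R M] : Function.Injective (TensorProduct.mk R Q M 1) :=
  (IsLocalizedModule.injective_iff_isRegular (nonZeroDivisors R) _).2
    fun c ↦ Module.Flat.isSMulRegular_of_nonZeroDivisors (M := M) c.2

theorem stmt_7_general (R : Type*) [CommRing R]
    (Q : Type*) [Field Q] [Algebra R Q] [IsFractionRing R Q]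
    (M : Type*) [AddCommGroup M] [Module R M] [Module.Free R M]
    (U : Submodule R M) (hU : ∃ V : Submodule R M, IsCompl U V) (r : ℕ)
    (F : (⋀[R]^r U) →ₗ[R] (⋀[R]^r M))
    (hF : ∀ x : ⋀[R]^r U,
      (F x : ExteriorAlgebra R M) = ExteriorAlgebra.map U.subtype (x : ExteriorAlgebra R U)) :
    Function.Injective F ∧
    Function.Injective ((TensorProduct.mk R Q (⋀[R]^r M)) 1) ∧
    LinearMap.range (((TensorProduct.mk R Q (⋀[R]^r M)) 1).comp F) =
      (LinearMap.range (LinearMap.baseChange Q F)).restrictScalars R ⊓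
        LinearMap.range ((TensorProduct.mk R Q (⋀[R]^r M)) 1) := by
  obtain ⟨V, hV⟩ := hU
  have hF_eq : F = exteriorPower.map r U.subtype :=
    LinearMap.ext fun x ↦ Subtype.ext <| by rw [hF, exteriorPower.coe_map_apply]
  have hretract : exteriorPower.map r (U.projectionOnto V hV) ∘ₗ F = LinearMap.id := by
    rw [hF_eq, ← exteriorPower.map_comp, Submodule.projectionOnto_comp_subtype,
      exteriorPower.map_id]
  exact ⟨hF_eq ▸ exteriorPower.map_injective _ (Submodule.projectionOnto_comp_subtype hV),
    TensorProduct.mk_one_injective_of_isFractionRing Q _,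
    LinearMap.range_mk_comp_eq_range_baseChange_inf_range_mk F _ hretract⟩

/-- Let `R` be a discrete valuation ring with fraction field `Q`, `M` a finite free
`R`-module, and `U ⊆ M` an `R`-submodule which is a direct summand of `M`.  Let
`F : ⋀^r U → ⋀^r M` be the natural map on `r`-th exterior powers induced by the inclusion
`U ⊆ M` (characterised by the hypothesis `hF` via the functorial map of exterior algebras).
Then `F` and the natural map `⋀^r M → Q ⊗_R ⋀^r M`, `z ↦ 1 ⊗ z`, are injective, and inside
`Q ⊗_R ⋀^r M` the image of `⋀^r U` equals the intersection of the `Q`-subspace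
`Q ⊗_R ⋀^r U` (the range of the base change of `F`) with the image of `⋀^r M`. -/
theorem stmt_7 (R : Type*) [CommRing R] [IsDomain R] [IsDiscreteValuationRing R]
    (Q : Type*) [Field Q] [Algebra R Q] [IsFractionRing R Q]
    (M : Type*) [AddCommGroup M] [Module R M] [Module.Free R M] [Module.Finite R M]
    (U : Submodule R M) (hU : ∃ V : Submodule R M, IsCompl U V) (r : ℕ)
    (F : (⋀[R]^r U) →ₗ[R] (⋀[R]^r M))
    (hF : ∀ x : ⋀[R]^r U,
      (F x : ExteriorAlgebra R M) = ExteriorAlgebra.map U.subtype (x : ExteriorAlgebra R U)) :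
    Function.Injective F ∧
    Function.Injective ((TensorProduct.mk R Q (⋀[R]^r M)) 1) ∧
    LinearMap.range (((TensorProduct.mk R Q (⋀[R]^r M)) 1).comp F) =
      (LinearMap.range (LinearMap.baseChange Q F)).restrictScalars R ⊓
        LinearMap.range ((TensorProduct.mk R Q (⋀[R]^r M)) 1) :=
  stmt_7_general R Q M U hU r F hF
end

section
/- Let p be a prime, let E be a finite unramified extension of ℚ_p with ring of integers 𝒪, and let P be a finite abelian group of p-power order. Set Λ := 𝒪[P][[T]], the ring of formal power series over the group algebra 𝒪[P], and let 𝔭 be the ideal of Λ generated by the radical √(p𝒪[P]). Then 𝔭 is a prime ideal of Λ, every element of Λ ∖ 𝔭 is a non-zero-divisor of Λ, and the canonical ring homomorphism Q(Λ) → Q(Λ_𝔭) from the total quotient ring of Λ to the total quotient ring of the localization Λ_𝔭 is an isomorphism. -/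
/-!
Write `R = 𝒪[P]` and `I = √(pR)`. Since every `g ∈ P` satisfies `(g - 1)^(p^n) ≡ g^(p^n) - 1 = 0`
modulo `p`, the quotient map `R → R/I` factors through the augmentation `R → 𝒪`, so `I` is the
preimage of the maximal ideal of `𝒪`; hence `I` is maximal, and by integrality of `R` over `𝒪` it
is the only maximal ideal, so it contains every prime. As `R` is noetherian, `𝔭 = I·Λ` consists of
the power series with all coefficients in `I`, i.e. it is the kernel of `Λ → (R/I)[[T]]`, a domain.
By Maschke `R` embeds in the semisimple ring `Frac(𝒪)[P]`, so it is reduced. If `y x = 0` with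
`y ≠ 0`, some coefficient of `y` avoids a prime `J`; in the domain `(R/J)[[T]]` the image of `x`
vanishes, so all coefficients of `x` lie in `J ⊆ I`, i.e. `x ∈ 𝔭`. Finally, inverting a set of
non-zero-divisors does not change the total quotient ring.
-/

open scoped nonZeroDivisors

theorem sub_one_mem_radical_span_of_pow_eq_one {A : Type*} [CommRing A] {p : ℕ} [Fact p.Prime]
    {n : ℕ} {a : A} (ha : a ^ p ^ n = 1) : a - 1 ∈ (Ideal.span {(p : A)}).radical := by
  by_cases hp : IsUnit (p : A)
  · rw [Ideal.span_singleton_eq_top.mpr hp, Ideal.radical_top]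
    trivial
  · have := CharP.quotient A p hp
    refine ⟨p ^ n, ?_⟩
    rw [← Ideal.Quotient.eq_zero_iff_mem, map_pow, map_sub, map_one, sub_pow_char_pow, ← map_pow,
      ha, map_one, one_pow, sub_self]

namespace MonoidAlgebra

theorem isReduced_of_isDomain {R G : Type*} [CommRing R] [IsDomain R] [CommGroup G] [Finite G]
    [NeZero (Nat.card G : R)] : IsReduced (MonoidAlgebra R G) := by
  have hinj := IsFractionRing.injective R (FractionRing R)
  have : NeZero (Nat.card G : FractionRing R) := ⟨by
    rw [← map_natCast (algebraMap R (FractionRing R))]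
    exact (map_ne_zero_iff _ hinj).mpr (NeZero.ne _)⟩
  exact isReduced_of_injective (mapRingHom G (algebraMap R (FractionRing R)))
    (map_injective _ hinj)

variable {𝒪 G : Type*} [CommRing 𝒪] [IsLocalRing 𝒪] [CommMonoid G] {p : ℕ} [Fact p.Prime]

theorem radical_span_natCast_eq_comap_maximalIdeal
    (h𝒪 : IsLocalRing.maximalIdeal 𝒪 = Ideal.span {(p : 𝒪)}) {n : ℕ}
    (hG : ∀ g : G, g ^ p ^ n = 1) :
    (Ideal.span {(p : MonoidAlgebra 𝒪 G)}).radical =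
      (IsLocalRing.maximalIdeal 𝒪).comap (lift 𝒪 𝒪 G 1) := by
  set I := (Ideal.span {(p : MonoidAlgebra 𝒪 G)}).radical
  set ε := lift 𝒪 𝒪 G 1
  refine le_antisymm ?_ fun x hx => ?_
  · refine (Ideal.comap_isPrime _ _).isRadical.radical_le_iff.mpr ?_
    rw [Ideal.span_le, Set.singleton_subset_iff, SetLike.mem_coe, Ideal.mem_comap, map_natCast,
      h𝒪]
    exact Ideal.subset_span rfl
  have hfactor : (Ideal.Quotient.mkₐ 𝒪 I) = (Algebra.ofId 𝒪 _).comp ε := by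
    refine algHom_ext (fun g => ?_) (Subsingleton.elim _ _)
    rw [AlgHom.comp_apply, lift_single, one_smul, MonoidHom.one_apply, map_one,
      Ideal.Quotient.mkₐ_eq_mk, ← map_one (Ideal.Quotient.mk I), Ideal.Quotient.eq]
    exact sub_one_mem_radical_span_of_pow_eq_one (n := n) (by rw [single_pow, hG, one_pow]; rfl)
  rw [Ideal.mem_comap, h𝒪, Ideal.mem_span_singleton'] at hx
  obtain ⟨c, hc⟩ := hx
  have hp : (p : MonoidAlgebra 𝒪 G ⧸ I) = 0 := by
    rw [← map_natCast (Ideal.Quotient.mk I), Ideal.Quotient.eq_zero_iff_mem]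
    exact Ideal.le_radical (Ideal.subset_span rfl)
  rw [← Ideal.Quotient.eq_zero_iff_mem, ← Ideal.Quotient.mkₐ_eq_mk 𝒪, hfactor, AlgHom.comp_apply,
    ← hc, map_mul, map_natCast, hp, mul_zero]

theorem le_radical_span_natCast_of_isPrime [Finite G]
    (h𝒪 : IsLocalRing.maximalIdeal 𝒪 = Ideal.span {(p : 𝒪)}) {n : ℕ}
    (hG : ∀ g : G, g ^ p ^ n = 1) {q : Ideal (MonoidAlgebra 𝒪 G)} (hq : q.IsPrime) :
    q ≤ (Ideal.span {(p : MonoidAlgebra 𝒪 G)}).radical := by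
  have hI : (Ideal.span {(p : MonoidAlgebra 𝒪 G)}).radical.IsMaximal := by
    rw [radical_span_natCast_eq_comap_maximalIdeal h𝒪 hG]
    exact Ideal.comap_isMaximal_of_surjective _
      fun a => ⟨algebraMap 𝒪 _ a, (lift 𝒪 𝒪 G 1).commutes a⟩
  obtain ⟨M, hM, hqM⟩ := q.exists_le_maximal hq.ne_top
  have hpM : (p : MonoidAlgebra 𝒪 G) ∈ M := by
    have hcomap : M.comap (algebraMap 𝒪 _) = IsLocalRing.maximalIdeal 𝒪 :=
      IsLocalRing.eq_maximalIdeal (Ideal.isMaximal_comap_of_isIntegral_of_isMaximal M)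
    have : (p : 𝒪) ∈ M.comap (algebraMap 𝒪 _) := hcomap ▸ h𝒪 ▸ Ideal.subset_span rfl
    simpa using this
  have hIM : (Ideal.span {(p : MonoidAlgebra 𝒪 G)}).radical ≤ M :=
    hM.isPrime.isRadical.radical_le_iff.mpr (Ideal.span_le.mpr (by simpa using hpM))
  exact hqM.trans (hI.eq_of_le hM.ne_top hIM).ge

end MonoidAlgebra

namespace PowerSeries

variable {R : Type*} [CommRing R]

theorem mem_ker_map_iff {S : Type*} [CommRing S] {f : R →+* S} {x : R⟦X⟧} :
    x ∈ RingHom.ker (map f) ↔ ∀ k, coeff k x ∈ RingHom.ker f := by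
  simp only [RingHom.mem_ker, PowerSeries.ext_iff, coeff_map, map_zero]

theorem ker_map_of_fg {S : Type*} [CommRing S] (f : R →+* S) (hf : (RingHom.ker f).FG) :
    RingHom.ker (map f) = (RingHom.ker f).map C := by
  refine le_antisymm (fun x hx => ?_) (Ideal.map_le_iff_le_comap.mpr fun a ha => ?_)
  · obtain ⟨s, hs⟩ := hf
    have hcoeff : ∀ k, ∃ c : R → R, ∑ a ∈ s, c a • a = coeff k x := by
      intro k
      have hk := mem_ker_map_iff.mp hx k
      rw [← hs] at hk
      exact (Submodule.mem_span_finset.mp hk).imp fun _ h => h.2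
    choose c hc using hcoeff
    have hx : x = ∑ a ∈ s, C a * mk fun k => c k a := by
      ext k
      simp [map_sum, coeff_C_mul, ← hc k, mul_comm]
    rw [hx]
    exact Ideal.sum_mem _ fun a ha =>
      Ideal.mul_mem_right _ _ (Ideal.mem_map_of_mem _ (hs ▸ Ideal.subset_span ha))
  · rw [Ideal.mem_comap, RingHom.mem_ker, map_C, ha, map_zero]

theorem mem_nonZeroDivisors_of_forall_isPrime [IsReduced R] {x : R⟦X⟧}
    (hx : ∀ J : Ideal R, J.IsPrime → ∃ k, coeff k x ∉ J) : x ∈ R⟦X⟧⁰ := by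
  refine mem_nonZeroDivisors_iff_right.mpr fun y hyx => ?_
  by_contra hy
  obtain ⟨k, hk⟩ : ∃ k, coeff k y ≠ 0 := by
    by_contra! h
    exact hy (PowerSeries.ext h)
  obtain ⟨J, hJ, hyJ⟩ : ∃ J : Ideal R, J.IsPrime ∧ coeff k y ∉ J := by
    by_contra! h
    exact hk (nilpotent_iff_mem_prime.mpr h).eq_zero
  have hxy : y * x ∈ RingHom.ker (map (Ideal.Quotient.mk J)) := by rw [hyx]; exact zero_mem _
  have hy' : y ∉ RingHom.ker (map (Ideal.Quotient.mk J)) := fun h =>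
    hyJ (by simpa using mem_ker_map_iff.mp h k)
  have hx' := ((RingHom.ker_isPrime _).mem_or_mem hxy).resolve_left hy'
  obtain ⟨m, hm⟩ := hx J hJ
  exact hm (by simpa using mem_ker_map_iff.mp hx' m)

end PowerSeries

theorem FractionRing.exists_ringEquiv_localization {A : Type*} [CommRing A] {M : Submonoid A}
    (hM : M ≤ A⁰) :
    ∃ e : FractionRing A ≃+* FractionRing (Localization M), ∀ x : A,
      e (algebraMap A _ x) = algebraMap (Localization M) _ (algebraMap A _ x) := by
  let := IsLocalization.localizationAlgebraOfSubmonoidLe (Localization M) (FractionRing A) M A⁰ hM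
  have := IsLocalization.localization_isScalarTower_of_submonoid_le (Localization M)
    (FractionRing A) M A⁰ hM
  have := IsFractionRing.isFractionRing_of_isLocalization M (Localization M) (FractionRing A) hM
  let e : FractionRing A ≃ₐ[Localization M] FractionRing (Localization M) :=
    IsLocalization.algEquiv (Localization M)⁰ _ _
  refine ⟨e.toRingEquiv, fun x => ?_⟩
  rw [IsScalarTower.algebraMap_apply A (Localization M) (FractionRing A) x]
  exact e.commutes _

/-- Let `p` be a prime, `E` a finite unramified extension of `ℚ_p` with ring of integers `𝒪`
(encoded abstractly: a local domain of characteristic zero, finite over `ℤ_p`, whose maximal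
ideal is generated by `p`), and `P` a finite abelian group of `p`-power order.  Set
`Λ := 𝒪[P][[T]]` and let `𝔭` be the ideal of `Λ` generated by the radical `√(p𝒪[P])`.
Then `𝔭` is prime, every element of `Λ ∖ 𝔭` is a non-zero-divisor of `Λ`, and the canonical
ring homomorphism `Q(Λ) → Q(Λ_𝔭)` between total quotient rings is an isomorphism (stated as:
there is a ring isomorphism compatible with the canonical maps from `Λ`). -/
theorem stmt_9 (p : ℕ) [Fact p.Prime]
    (𝒪 : Type*) [CommRing 𝒪] [IsDomain 𝒪] [CharZero 𝒪] [IsLocalRing 𝒪]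
    [Algebra ℤ_[p] 𝒪] [Module.Finite ℤ_[p] 𝒪]
    (h𝒪 : IsLocalRing.maximalIdeal 𝒪 = Ideal.span {(p : 𝒪)})
    (P : Type*) [CommGroup P] [Finite P] (n : ℕ) (hP : Nat.card P = p ^ n)
    (𝔭 : Ideal (PowerSeries (MonoidAlgebra 𝒪 P)))
    (h𝔭 : 𝔭 = Ideal.map (PowerSeries.C : MonoidAlgebra 𝒪 P →+* PowerSeries (MonoidAlgebra 𝒪 P))
        ((Ideal.span {(p : MonoidAlgebra 𝒪 P)}).radical)) :
    ∃ _ : 𝔭.IsPrime,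
      (∀ x : PowerSeries (MonoidAlgebra 𝒪 P), x ∉ 𝔭 →
        x ∈ nonZeroDivisors (PowerSeries (MonoidAlgebra 𝒪 P))) ∧
      ∃ e : FractionRing (PowerSeries (MonoidAlgebra 𝒪 P)) ≃+*
          FractionRing (Localization.AtPrime 𝔭),
        ∀ x : PowerSeries (MonoidAlgebra 𝒪 P),
          e (algebraMap (PowerSeries (MonoidAlgebra 𝒪 P))
              (FractionRing (PowerSeries (MonoidAlgebra 𝒪 P))) x) =
            algebraMap (Localization.AtPrime 𝔭) (FractionRing (Localization.AtPrime 𝔭))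
              (algebraMap (PowerSeries (MonoidAlgebra 𝒪 P)) (Localization.AtPrime 𝔭) x) := by
  have hexp : ∀ g : P, g ^ p ^ n = 1 := fun g => hP ▸ pow_card_eq_one'
  have hI : (Ideal.span {(p : MonoidAlgebra 𝒪 P)}).radical.IsPrime := by
    rw [MonoidAlgebra.radical_span_natCast_eq_comap_maximalIdeal h𝒪 hexp]
    exact Ideal.comap_isPrime _ _
  set I := (Ideal.span {(p : MonoidAlgebra 𝒪 P)}).radical
  have : IsNoetherianRing 𝒪 := isNoetherian_of_tower ℤ_[p] inferInstance
  have : IsNoetherianRing (MonoidAlgebra 𝒪 P) := isNoetherian_of_tower 𝒪 inferInstance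
  have h𝔭ker : 𝔭 = RingHom.ker (PowerSeries.map (Ideal.Quotient.mk I)) := by
    rw [PowerSeries.ker_map_of_fg _ (by rw [Ideal.mk_ker]; exact IsNoetherian.noetherian I),
      Ideal.mk_ker, h𝔭]
  have h𝔭prime : 𝔭.IsPrime := h𝔭ker ▸ RingHom.ker_isPrime _
  have : NeZero (Nat.card P : 𝒪) := ⟨Nat.cast_ne_zero.mpr Nat.card_pos.ne'⟩
  have : IsReduced (MonoidAlgebra 𝒪 P) := MonoidAlgebra.isReduced_of_isDomain
  have hnzd : ∀ x, x ∉ 𝔭 → x ∈ nonZeroDivisors (PowerSeries (MonoidAlgebra 𝒪 P)) := by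
    intro x hx
    rw [h𝔭ker, PowerSeries.mem_ker_map_iff, Ideal.mk_ker] at hx
    obtain ⟨k, hk⟩ := not_forall.mp hx
    exact PowerSeries.mem_nonZeroDivisors_of_forall_isPrime fun J hJ =>
      ⟨k, fun h => hk (MonoidAlgebra.le_radical_span_natCast_of_isPrime h𝒪 hexp hJ h)⟩
  exact ⟨h𝔭prime, hnzd, FractionRing.exists_ringEquiv_localization fun x hx => hnzd x hx⟩
end
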